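/- arXiv:2010.00181 — 5 statements merged into one kernel-verified Lean document; each statement's English description precedes it below -/
import Mathlib

section
/- Let Y_1, ..., Y_n be independent Gaussian random variables with Y_i ~ N(μ_i, σ²) where μ_1 ≤ μ_2 ≤ ... ≤ μ_n. For any δ > 0, if min_{1 ≤ i ≤ n-1} (μ_{i+1} - μ_i) > 2σ√(log((n-1)/δ)), then P(Y_1 ≤ Y_2 ≤ ... ≤ Y_n) > 1 - δ. -/
open MeasureTheory ProbabilityTheory Real
open scoped NNReal ENNReal


lemma gauss_symm_map {V : ℝ≥0} (t : ℝ) :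
    (gaussianReal t V).map (fun x => -x + 2*t) = gaussianReal t V := by
  have h1 : (gaussianReal t V).map (fun x => (-1 : ℝ) * x) = gaussianReal (-t) V := by
    rw [show (fun x => (-1:ℝ) * x) = ((-1 : ℝ) * ·) from rfl, gaussianReal_map_const_mul]
    congr 1
    · ring
    · ext; simp
  have h2 : (fun x : ℝ => -x + 2*t) = (· + 2*t) ∘ (fun x => (-1:ℝ)*x) := by
    funext x; simp only [Function.comp]; ring
  rw [h2, ← Measure.map_map (by fun_prop) (by fun_prop), h1, gaussianReal_map_add_const]
  congr 1; ring

lemma gauss_Ici_self {V : ℝ≥0} (hV : V ≠ 0) (t : ℝ) :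
    gaussianReal t V (Set.Ici t) = 1/2 := by
  set ν := gaussianReal t V with hν
  have hsing : ν {t} = 0 := by
    refine (gaussianReal_absolutelyContinuous t hV) ?_
    simp
  have hIic : ν (Set.Ici t) = ν (Set.Iic t) := by
    conv_lhs => rw [hν, ← gauss_symm_map (V := V) t]
    rw [Measure.map_apply (by fun_prop) measurableSet_Ici]
    congr 1
    ext x
    simp only [Set.mem_preimage, Set.mem_Ici, Set.mem_Iic]
    constructor <;> intro h <;> linarith
  have hIio : ν (Set.Iic t) = ν (Set.Iio t) := by
    apply le_antisymm
    · calc ν (Set.Iic t) = ν (Set.Iio t ∪ {t}) := by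
            congr 1; ext x; simp [le_iff_lt_or_eq]
        _ ≤ ν (Set.Iio t) + ν {t} := measure_union_le _ _
        _ = ν (Set.Iio t) := by rw [hsing, add_zero]
    · exact measure_mono Set.Iio_subset_Iic_self
  have hsum : ν (Set.Ici t) + ν (Set.Iio t) = 1 := by
    rw [← measure_union (by simp [Set.disjoint_left]) measurableSet_Iio]
    rw [show Set.Ici t ∪ Set.Iio t = Set.univ by ext x; simp [le_or_gt]]
    exact measure_univ
  have h2 : 2 * ν (Set.Ici t) = 1 := by
    rw [two_mul, hIic, hIio]; nth_rewrite 1 [← hIio, ← hIic]; exact hsum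
  rw [ENNReal.eq_div_iff (by norm_num) (by norm_num)]
  exact h2

lemma gauss_tail_le {V : ℝ≥0} (hV : V ≠ 0) {m t : ℝ} (h : m ≤ t) :
    gaussianReal m V (Set.Ici t) ≤ ENNReal.ofReal (exp (-(t-m)^2 / (2*(V:ℝ))) / 2) := by
  have hVpos : (0:ℝ) < V := by positivity
  have hhalf : ∫ x in Set.Ici t, gaussianPDFReal t V x = 1/2 := by
    have h1 := gauss_Ici_self hV t
    rw [gaussianReal_apply_eq_integral _ hV] at h1
    have h2 := congrArg ENNReal.toReal h1
    rwa [ENNReal.toReal_ofReal (setIntegral_nonneg measurableSet_Ici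
      (fun x _ => gaussianPDFReal_nonneg _ _ _)), ENNReal.toReal_div, ENNReal.toReal_one,
      ENNReal.toReal_ofNat] at h2
  rw [gaussianReal_apply_eq_integral _ hV]
  apply ENNReal.ofReal_le_ofReal
  have key : ∀ x ∈ Set.Ici t, gaussianPDFReal m V x
      ≤ exp (-(t-m)^2 / (2*(V:ℝ))) * gaussianPDFReal t V x := by
    intro x hx
    simp only [Set.mem_Ici] at hx
    unfold gaussianPDFReal
    rw [mul_comm (exp _), mul_assoc, mul_assoc, ← Real.exp_add]
    apply mul_le_mul_of_nonneg_left _ (by positivity)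
    apply Real.exp_le_exp.mpr
    rw [← add_div, div_le_div_iff_of_pos_right (by positivity)]
    nlinarith [mul_nonneg (sub_nonneg.mpr hx) (sub_nonneg.mpr h)]
  calc ∫ x in Set.Ici t, gaussianPDFReal m V x
      ≤ ∫ x in Set.Ici t, exp (-(t-m)^2 / (2*(V:ℝ))) * gaussianPDFReal t V x :=
        setIntegral_mono_on (integrable_gaussianPDFReal _ _).integrableOn
          (((integrable_gaussianPDFReal _ _).const_mul _).integrableOn)
          measurableSet_Ici key
    _ = exp (-(t-m)^2 / (2*(V:ℝ))) * ∫ x in Set.Ici t, gaussianPDFReal t V x :=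
        integral_const_mul _ _
    _ = exp (-(t-m)^2 / (2*(V:ℝ))) / 2 := by rw [hhalf]; ring

lemma gauss_low_tail_le {V : ℝ≥0} (hV : V ≠ 0) {m t : ℝ} (h : t ≤ m) :
    gaussianReal m V (Set.Iic t) ≤ ENNReal.ofReal (exp (-(m-t)^2 / (2*(V:ℝ))) / 2) := by
  have hmap : (gaussianReal m V).map (fun x => (-1:ℝ) * x) = gaussianReal (-m) V := by
    rw [show (fun x => (-1:ℝ) * x) = ((-1 : ℝ) * ·) from rfl, gaussianReal_map_const_mul]
    congr 1
    · ring
    · ext; simp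
  have : gaussianReal m V (Set.Iic t) = gaussianReal (-m) V (Set.Ici (-t)) := by
    rw [← hmap, Measure.map_apply (by fun_prop) measurableSet_Ici]
    congr 1
    ext x
    simp only [Set.mem_preimage, Set.mem_Ici, Set.mem_Iic]
    constructor <;> intro h <;> linarith
  rw [this]
  have := gauss_tail_le hV (m := -m) (t := -t) (by linarith)
  convert this using 4
  ring

lemma gauss_Ioo_pos {V : ℝ≥0} (hV : V ≠ 0) {a b : ℝ} (hab : a < b) (m : ℝ) :
    0 < gaussianReal m V (Set.Ioo a b) := by
  rw [gaussianReal_apply_eq_integral _ hV]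
  apply ENNReal.ofReal_pos.mpr
  rw [setIntegral_pos_iff_support_of_nonneg_ae
    (ae_of_all _ (fun x => gaussianPDFReal_nonneg m V x))
    (integrable_gaussianPDFReal _ _).integrableOn]
  have hsupp : Function.support (gaussianPDFReal m V) = Set.univ := by
    ext x; simp [Function.mem_support, (gaussianPDFReal_pos m V x hV).ne']
  rw [hsupp, Set.univ_inter]
  simp [hab]

lemma pair_bound {Ω : Type*} [MeasurableSpace Ω] (P : Measure Ω) [IsProbabilityMeasure P]
    {V : ℝ≥0} (hV : V ≠ 0) {X Z : Ω → ℝ} (hX : Measurable X) (hZ : Measurable Z)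
    (hind : IndepFun X Z P) {m₁ m₂ : ℝ} (h12 : m₁ ≤ m₂)
    (hlX : P.map X = gaussianReal m₁ V) (hlZ : P.map Z = gaussianReal m₂ V) :
    P {ω | Z ω < X ω} ≤ ENNReal.ofReal (exp (-(m₂ - m₁)^2 / (4*(V:ℝ)))) := by
  have hVpos : (0:ℝ) < V := by positivity
  have hprod : P.map (fun ω => (X ω, Z ω)) = (P.map X).prod (P.map Z) :=
    (indepFun_iff_map_prod_eq_prod_map_map hX.aemeasurable hZ.aemeasurable).mp hind
  have hms : MeasurableSet {p : ℝ × ℝ | p.2 < p.1} :=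
    measurableSet_lt measurable_snd measurable_fst
  have h0 : P {ω | Z ω < X ω}
      = ∫⁻ x, gaussianReal m₂ V (Set.Iio x) ∂(gaussianReal m₁ V) := by
    have : {ω | Z ω < X ω} = (fun ω => (X ω, Z ω)) ⁻¹' {p : ℝ × ℝ | p.2 < p.1} := rfl
    rw [this, ← Measure.map_apply (hX.prodMk hZ) hms, hprod, hlX, hlZ,
      Measure.prod_apply hms]
    rfl
  set g : ℝ → ℝ := fun x => exp (-(m₂ - x)^2 / (2*(V:ℝ))) / 2 with hg
  have hgmeas : Measurable fun x => ENNReal.ofReal (g x) := by fun_prop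
  have hpt : ∀ x, gaussianReal m₂ V (Set.Iio x)
      ≤ ENNReal.ofReal (g x) + (Set.Ioi m₂).indicator (fun _ => 1) x := by
    intro x
    rcases le_or_gt x m₂ with hx | hx
    · refine le_trans ?_ le_self_add
      exact le_trans (measure_mono Set.Iio_subset_Iic_self) (gauss_low_tail_le hV hx)
    · refine le_trans ?_ le_add_self
      rw [Set.indicator_of_mem (Set.mem_Ioi.mpr hx)]
      exact prob_le_one
  -- the convolution-type integral
  have hb : (0:ℝ) < 1 / (V:ℝ) := by positivity
  set C : ℝ := (√(2 * π * (V:ℝ)))⁻¹ * (exp (-(m₂-m₁)^2 / (4*(V:ℝ))) / 2) with hC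
  have heq : ∀ x, gaussianPDFReal m₁ V x * g x
      = C * exp (-(1/(V:ℝ)) * (x - (m₁+m₂)/2)^2) := by
    intro x
    have expeq : rexp (-(x - m₁)^2 / (2*(V:ℝ))) * rexp (-(m₂ - x)^2 / (2*(V:ℝ)))
        = rexp (-(m₂-m₁)^2/(4*(V:ℝ))) * rexp (-(1/(V:ℝ))*(x-(m₁+m₂)/2)^2) := by
      rw [← Real.exp_add, ← Real.exp_add]
      congr 1
      field_simp
      ring
    simp only [hg, hC, gaussianPDFReal]
    linear_combination ((√(2 * π * (V:ℝ)))⁻¹ / 2) * expeq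
  have hint : Integrable (fun x => gaussianPDFReal m₁ V x * g x) := by
    simp_rw [heq]
    exact ((integrable_exp_neg_mul_sq hb).comp_sub_right ((m₁+m₂)/2)).const_mul C
  have hval : ∫ x, gaussianPDFReal m₁ V x * g x
      = exp (-(m₂-m₁)^2 / (4*(V:ℝ))) / (2 * √2) := by
    simp_rw [heq]
    rw [integral_const_mul,
      integral_sub_right_eq_self (μ := volume) (fun a => rexp (-(1/(V:ℝ)) * a^2)) ((m₁+m₂)/2),
      integral_gaussian]
    rw [hC]
    have h1 : π / (1 / (V:ℝ)) = π * V := by field_simp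
    rw [h1, show 2 * π * (V:ℝ) = 2 * (π * V) by ring, Real.sqrt_mul (by norm_num)]
    have h2 : √(π * (V:ℝ)) ≠ 0 := by positivity
    field_simp
  have hlin : ∫⁻ x, ENNReal.ofReal (g x) ∂(gaussianReal m₁ V)
      = ENNReal.ofReal (exp (-(m₂-m₁)^2 / (4*(V:ℝ))) / (2 * √2)) := by
    rw [gaussianReal_of_var_ne_zero _ hV,
      lintegral_withDensity_eq_lintegral_mul _ (measurable_gaussianPDF _ _) hgmeas]
    have : ∀ x, (gaussianPDF m₁ V * fun x => ENNReal.ofReal (g x)) x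
        = ENNReal.ofReal (gaussianPDFReal m₁ V x * g x) := by
      intro x
      simp only [Pi.mul_apply, gaussianPDF]
      rw [← ENNReal.ofReal_mul (gaussianPDFReal_nonneg _ _ _)]
    simp_rw [this]
    rw [← ofReal_integral_eq_lintegral_ofReal hint
      (ae_of_all _ (fun x => mul_nonneg (gaussianPDFReal_nonneg _ _ _) (by positivity))), hval]
  calc P {ω | Z ω < X ω}
      ≤ ∫⁻ x, (ENNReal.ofReal (g x) + (Set.Ioi m₂).indicator (fun _ => 1) x)
          ∂(gaussianReal m₁ V) := by rw [h0]; exact lintegral_mono hpt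
    _ = ENNReal.ofReal (exp (-(m₂-m₁)^2 / (4*(V:ℝ))) / (2 * √2))
        + gaussianReal m₁ V (Set.Ioi m₂) := by
        rw [lintegral_add_left hgmeas, hlin, lintegral_indicator measurableSet_Ioi]
        simp
    _ ≤ ENNReal.ofReal (exp (-(m₂-m₁)^2 / (4*(V:ℝ))) / (2 * √2))
        + ENNReal.ofReal (exp (-(m₂-m₁)^2 / (2*(V:ℝ))) / 2) := by
        gcongr
        exact le_trans (measure_mono Set.Ioi_subset_Ici_self) (gauss_tail_le hV h12)
    _ ≤ ENNReal.ofReal (exp (-(m₂ - m₁)^2 / (4*(V:ℝ)))) := by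
        rw [← ENNReal.ofReal_add (by positivity) (by positivity)]
        apply ENNReal.ofReal_le_ofReal
        have hsq : (1:ℝ) ≤ √2 := by
          rw [show (1:ℝ) = √1 by simp]
          exact Real.sqrt_le_sqrt (by norm_num)
        have hle : exp (-(m₂-m₁)^2 / (2*(V:ℝ))) ≤ exp (-(m₂-m₁)^2 / (4*(V:ℝ))) := by
          apply Real.exp_le_exp.mpr
          rw [div_le_div_iff₀ (by positivity) (by positivity)]
          nlinarith [sq_nonneg (m₂ - m₁)]
        set a := exp (-(m₂-m₁)^2 / (4*(V:ℝ)))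
        have ha : 0 < a := Real.exp_pos _
        calc a / (2 * √2) + exp (-(m₂-m₁)^2 / (2*(V:ℝ))) / 2
            ≤ a / (2 * √2) + a / 2 := by linarith
          _ ≤ a / 2 + a / 2 := by
              gcongr
              · nlinarith
          _ = a := by ring

/-- If `Y₀, …, Y_{n-1}` are independent Gaussians with nondecreasing means `μ i` and common
variance `σ²`, and all adjacent gaps exceed `2σ√(log((n-1)/δ))`, then
`P(Y₀ ≤ Y₁ ≤ ⋯ ≤ Y_{n-1}) > 1 - δ`. -/
theorem stmt1 {Ω : Type*} [MeasurableSpace Ω] (P : Measure Ω) [IsProbabilityMeasure P]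
    (n : ℕ) (Y : ℕ → Ω → ℝ) (μ : ℕ → ℝ) (σ δ : ℝ) (hσ : 0 < σ) (hδ : 0 < δ)
    (hlaw : ∀ i < n, P.map (Y i) = gaussianReal (μ i) (Real.toNNReal (σ ^ 2)))
    (hmeas : ∀ i, Measurable (Y i))
    (hindep : iIndepFun Y P)
    (hmono : ∀ i j, i ≤ j → j < n → μ i ≤ μ j)
    (hgap : ∀ i, i + 1 < n →
      μ (i + 1) - μ i > 2 * σ * Real.sqrt (Real.log ((n - 1 : ℝ) / δ))) :
    P {ω | ∀ i, i + 1 < n → Y i ω ≤ Y (i + 1) ω} > 1 - ENNReal.ofReal δ := by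
  set V : ℝ≥0 := Real.toNNReal (σ ^ 2) with hVdef
  have hVne : V ≠ 0 := by
    rw [hVdef, ne_eq, Real.toNNReal_eq_zero, not_le]
    positivity
  have hVcoe : (V : ℝ) = σ ^ 2 := Real.coe_toNNReal _ (sq_nonneg σ)
  set good := {ω | ∀ i, i + 1 < n → Y i ω ≤ Y (i + 1) ω} with hgood
  have hgoodmeas : MeasurableSet good := by
    have : good = ⋂ i, ⋂ (_ : i + 1 < n), {ω | Y i ω ≤ Y (i + 1) ω} := by
      ext ω; simp [hgood]
    rw [this]
    exact MeasurableSet.iInter fun i => MeasurableSet.iInter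
      fun _ => measurableSet_le (hmeas i) (hmeas (i + 1))
  rcases le_or_gt n 1 with hn | hn
  · have : good = Set.univ := by
      ext ω
      simp only [hgood, Set.mem_setOf_eq, Set.mem_univ, iff_true]
      intro i hi; omega
    rw [this, measure_univ]
    exact ENNReal.sub_lt_self ENNReal.one_ne_top one_ne_zero
      (ENNReal.ofReal_pos.mpr hδ).ne'
  have hposn : (0:ℝ) < (n:ℝ) - 1 := by
    have : (2:ℝ) ≤ (n:ℝ) := by exact_mod_cast hn
    linarith
  have hpair : ∀ i, i + 1 < n →
      P {ω | Y (i + 1) ω < Y i ω} < ENNReal.ofReal (δ / ((n:ℝ) - 1)) := by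
    intro i hi
    refine lt_of_le_of_lt (pair_bound P hVne (hmeas i) (hmeas (i + 1))
      (hindep.indepFun (show i ≠ i + 1 by omega)) (hmono i (i + 1) (by omega) hi)
      (hlaw i (by omega)) (hlaw (i + 1) hi)) ?_
    rw [ENNReal.ofReal_lt_ofReal_iff (by positivity)]
    have hΔ := hgap i hi
    set Δ := μ (i + 1) - μ i with hΔdef
    set L := Real.log (((n:ℝ) - 1) / δ) with hL
    have hsq : 0 ≤ 2 * σ * Real.sqrt L := by positivity
    have hΔpos : 0 < Δ := lt_of_le_of_lt hsq hΔ
    have hA : L < Δ ^ 2 / (4 * (V:ℝ)) := by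
      rw [hVcoe]
      rcases le_or_gt L 0 with hL0 | hL0
      · exact lt_of_le_of_lt hL0 (by positivity)
      · have h2 : (2 * σ * Real.sqrt L) ^ 2 < Δ ^ 2 := by nlinarith
        rw [mul_pow, mul_pow, Real.sq_sqrt hL0.le] at h2
        rw [lt_div_iff₀ (by positivity)]
        nlinarith
    calc rexp (-Δ ^ 2 / (4 * (V:ℝ))) < rexp (-L) := by
          apply Real.exp_lt_exp.mpr; rw [neg_div]; linarith
      _ = δ / ((n:ℝ) - 1) := by
          rw [Real.exp_neg, hL, Real.exp_log (by positivity), inv_div]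
  have hcompl : goodᶜ ⊆ ⋃ i ∈ Finset.range (n - 1), {ω | Y (i + 1) ω < Y i ω} := by
    intro ω hω
    simp only [hgood, Set.mem_compl_iff, Set.mem_setOf_eq, not_forall, Classical.not_imp,
      not_le] at hω
    obtain ⟨i, hi, hlt⟩ := hω
    exact Set.mem_biUnion (Finset.mem_range.mpr (by omega)) hlt
  have hbad : P goodᶜ < ENNReal.ofReal δ := by
    calc P goodᶜ ≤ ∑ i ∈ Finset.range (n - 1), P {ω | Y (i + 1) ω < Y i ω} :=
          le_trans (measure_mono hcompl) (measure_biUnion_finset_le _ _)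
      _ < ∑ _i ∈ Finset.range (n - 1), ENNReal.ofReal (δ / ((n:ℝ) - 1)) := by
          have hne0 : n - 1 ≠ 0 := by omega
          refine ENNReal.sum_lt_sum_of_nonempty (Finset.nonempty_range_iff.mpr hne0) ?_
          intro i hi
          exact hpair i (by have := Finset.mem_range.mp hi; omega)
      _ = ENNReal.ofReal δ := by
          rw [Finset.sum_const, Finset.card_range, nsmul_eq_mul,
            ← ENNReal.ofReal_natCast, ← ENNReal.ofReal_mul (by positivity)]
          congr 1
          rw [Nat.cast_sub (by omega), Nat.cast_one]
          field_simp
  rcases le_or_gt (1:ℝ≥0∞) (ENNReal.ofReal δ) with hδ1 | hδ1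
  · rw [gt_iff_lt, tsub_eq_zero_of_le hδ1]
    have hne : (Finset.range (n - 1)).Nonempty := Finset.nonempty_range_iff.mpr (by omega)
    have hgap0 : ∀ i ∈ Finset.range (n - 1), (0:ℝ) < μ (i + 1) - μ i := by
      intro i hi
      have hi' : i + 1 < n := by have := Finset.mem_range.mp hi; omega
      exact lt_of_le_of_lt (by positivity) (hgap i hi')
    set g := (Finset.range (n - 1)).inf' hne (fun i => μ (i + 1) - μ i) with hgdef
    have hgpos : 0 < g := (Finset.lt_inf'_iff _).mpr hgap0
    have hsub : (⋂ i ∈ Finset.range n, Y i ⁻¹' Set.Ioo (μ i - g/2) (μ i + g/2)) ⊆ good := by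
      intro ω hω
      simp only [Set.mem_iInter, Set.mem_preimage, Set.mem_Ioo] at hω
      intro i hi
      have h1 := hω i (Finset.mem_range.mpr (by omega))
      have h2 := hω (i + 1) (Finset.mem_range.mpr (by omega))
      have hgle : g ≤ μ (i + 1) - μ i :=
        Finset.inf'_le _ (Finset.mem_range.mpr (by omega))
      have := h1.2
      have := h2.1
      linarith
    refine lt_of_lt_of_le ?_ (measure_mono hsub)
    rw [hindep.meas_biInter (fun i _ => ⟨Set.Ioo (μ i - g/2) (μ i + g/2), measurableSet_Ioo, rfl⟩)]
    rw [CanonicallyOrderedAdd.prod_pos]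
    intro i hi
    have : P (Y i ⁻¹' Set.Ioo (μ i - g/2) (μ i + g/2))
        = gaussianReal (μ i) V (Set.Ioo (μ i - g/2) (μ i + g/2)) := by
      rw [← hlaw i (Finset.mem_range.mp hi), Measure.map_apply (hmeas i) measurableSet_Ioo]
    rw [this]
    exact gauss_Ioo_pos hVne (by linarith) _
  · rw [gt_iff_lt, ENNReal.sub_lt_iff_lt_right (by simp) hδ1.le]
    calc (1:ℝ≥0∞) = P Set.univ := measure_univ.symm
      _ = P good + P goodᶜ := (measure_add_measure_compl hgoodmeas).symm
      _ < P good + ENNReal.ofReal δ := ENNReal.add_lt_add_left (measure_ne_top _ _) hbad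
end

section
/- Let Y_1 ~ Poisson(μ_1) and Y_2 ~ Poisson(μ_2) be independent with μ_1 ≤ μ_2. Then P(Y_1 > Y_2) ≤ exp(-(√μ_2 - √μ_1)²). -/
open MeasureTheory ProbabilityTheory Real NNReal ENNReal

lemma poisson_mgf_aux (r : ℝ≥0) (a : ℝ) (ha : 0 ≤ a) :
    ∫⁻ n, ENNReal.ofReal (a ^ n) ∂(poissonMeasure r) =
      ENNReal.ofReal (Real.exp (r * (a - 1))) := by
  rw [lintegral_countable']
  have hsing : ∀ n : ℕ, (poissonMeasure r) {n} = ENNReal.ofReal (poissonPMFReal r n) := by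
    intro n
    rw [poissonMeasure_singleton]
    rfl
  have h1 : ∀ n : ℕ, ENNReal.ofReal (a ^ n) * (poissonMeasure r) {n} =
      ENNReal.ofReal (Real.exp (-r) * ((a * r) ^ n / (Nat.factorial n : ℝ))) := by
    intro n
    rw [hsing, ← ENNReal.ofReal_mul (by positivity)]
    congr 1
    rw [poissonPMFReal, mul_pow]
    push_cast
    ring
  simp_rw [h1]
  rw [← ENNReal.ofReal_tsum_of_nonneg (fun n => by positivity)
    (((Real.summable_pow_div_factorial (a * r)).mul_left _))]
  congr 1
  have hexp : HasSum (fun n : ℕ => (a * r) ^ n / (Nat.factorial n : ℝ)) (Real.exp (a * r)) := by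
    rw [Real.exp_eq_exp_ℝ]
    exact NormedSpace.expSeries_div_hasSum_exp (a * r)
  rw [(hexp.mul_left (Real.exp (-r))).tsum_eq, ← Real.exp_add]
  ring_nf

/-- If `Y₁ ~ Poisson(μ₁)`, `Y₂ ~ Poisson(μ₂)` are independent with `μ₁ ≤ μ₂`,
then `P(Y₁ > Y₂) ≤ exp (-(√μ₂ - √μ₁)²)`. -/
theorem stmt2 {Ω : Type*} [MeasurableSpace Ω] (P : Measure Ω) [IsProbabilityMeasure P]
    (Y₁ Y₂ : Ω → ℕ) (μ₁ μ₂ : ℝ≥0) (hμ₁ : 0 < μ₁) (hμ : μ₁ ≤ μ₂)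
    (hY₁ : P.map Y₁ = poissonMeasure μ₁)
    (hY₂ : P.map Y₂ = poissonMeasure μ₂)
    (hmeas₁ : Measurable Y₁) (hmeas₂ : Measurable Y₂)
    (hindep : IndepFun Y₁ Y₂ P) :
    P {ω | Y₂ ω < Y₁ ω} ≤
      ENNReal.ofReal (Real.exp (-(Real.sqrt μ₂ - Real.sqrt μ₁) ^ 2)) := by
  have hμ₁R : (0:ℝ) < (μ₁:ℝ) := by exact_mod_cast hμ₁
  have hμ₂R : (0:ℝ) < (μ₂:ℝ) := lt_of_lt_of_le hμ₁R (NNReal.coe_le_coe.2 hμ)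
  have hs₁ : (0:ℝ) < Real.sqrt μ₁ := Real.sqrt_pos.2 hμ₁R
  have hs₂ : (0:ℝ) < Real.sqrt μ₂ := Real.sqrt_pos.2 hμ₂R
  set a : ℝ := Real.sqrt μ₂ / Real.sqrt μ₁ with ha_def
  set b : ℝ := Real.sqrt μ₁ / Real.sqrt μ₂ with hb_def
  have ha0 : 0 < a := div_pos hs₂ hs₁
  have hb0 : 0 < b := div_pos hs₁ hs₂
  have hab : a * b = 1 := by
    rw [ha_def, hb_def, div_mul_div_comm, mul_comm]
    exact div_self (by positivity)
  have ha1 : 1 ≤ a := by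
    rw [le_div_iff₀ hs₁, one_mul]
    exact Real.sqrt_le_sqrt (by exact_mod_cast hμ)
  -- the exponential functions
  set f : Ω → ℝ≥0∞ := fun ω => ENNReal.ofReal (a ^ Y₁ ω) with hf_def
  set g : Ω → ℝ≥0∞ := fun ω => ENNReal.ofReal (b ^ Y₂ ω) with hg_def
  have hmf : Measurable f := by
    exact ENNReal.measurable_ofReal.comp ((measurable_const.pow measurable_id).comp hmeas₁)
  have hmg : Measurable g := by
    exact ENNReal.measurable_ofReal.comp ((measurable_const.pow measurable_id).comp hmeas₂)
  -- step 1 : P set ≤ ∫⁻ f * g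
  have step1 : P {ω | Y₂ ω < Y₁ ω} ≤ ∫⁻ ω, (f * g) ω ∂P := by
    apply meas_le_lintegral₀ (hmf.mul hmg).aemeasurable
    intro ω hω
    simp only [Set.mem_setOf_eq] at hω
    simp only [Pi.mul_apply, hf_def, hg_def]
    rw [← ENNReal.ofReal_mul (by positivity), ← ENNReal.ofReal_one]
    apply ENNReal.ofReal_le_ofReal
    have hn : Y₁ ω = (Y₁ ω - Y₂ ω) + Y₂ ω := by omega
    have : a ^ Y₁ ω * b ^ Y₂ ω = a ^ (Y₁ ω - Y₂ ω) * (a * b) ^ Y₂ ω := by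
      nth_rewrite 1 [hn]
      rw [pow_add, mul_pow]; ring
    rw [this, hab, one_pow, mul_one]
    exact one_le_pow₀ ha1
  -- step 2 : independence splits the integral
  have step2 : ∫⁻ ω, (f * g) ω ∂P = (∫⁻ ω, f ω ∂P) * ∫⁻ ω, g ω ∂P := by
    apply lintegral_mul_eq_lintegral_mul_lintegral_of_indepFun hmf hmg
    exact hindep.comp (measurable_from_nat (f := fun n : ℕ => ENNReal.ofReal (a ^ n)))
      (measurable_from_nat (f := fun n : ℕ => ENNReal.ofReal (b ^ n)))
  -- step 3 : compute each integral via the Poisson measure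
  have hcalc1 : ∫⁻ ω, f ω ∂P = ENNReal.ofReal (Real.exp (μ₁ * (a - 1))) := by
    have : ∫⁻ ω, f ω ∂P = ∫⁻ n, ENNReal.ofReal (a ^ n) ∂(P.map Y₁) := by
      rw [lintegral_map measurable_from_nat hmeas₁]
    rw [this, hY₁, poisson_mgf_aux _ _ ha0.le]
  have hcalc2 : ∫⁻ ω, g ω ∂P = ENNReal.ofReal (Real.exp (μ₂ * (b - 1))) := by
    have : ∫⁻ ω, g ω ∂P = ∫⁻ n, ENNReal.ofReal (b ^ n) ∂(P.map Y₂) := by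
      rw [lintegral_map measurable_from_nat hmeas₂]
    rw [this, hY₂, poisson_mgf_aux _ _ hb0.le]
  -- combine
  calc P {ω | Y₂ ω < Y₁ ω} ≤ ∫⁻ ω, (f * g) ω ∂P := step1
    _ = (∫⁻ ω, f ω ∂P) * ∫⁻ ω, g ω ∂P := step2
    _ = ENNReal.ofReal (Real.exp (μ₁ * (a - 1))) * ENNReal.ofReal (Real.exp (μ₂ * (b - 1))) := by
        rw [hcalc1, hcalc2]
    _ = ENNReal.ofReal (Real.exp (-(Real.sqrt μ₂ - Real.sqrt μ₁) ^ 2)) := by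
        rw [← ENNReal.ofReal_mul (Real.exp_nonneg _), ← Real.exp_add]
        congr 1
        have hsq1 : Real.sqrt μ₁ ^ 2 = (μ₁:ℝ) := Real.sq_sqrt hμ₁R.le
        have hsq2 : Real.sqrt μ₂ ^ 2 = (μ₂:ℝ) := Real.sq_sqrt hμ₂R.le
        have h1 : (μ₁:ℝ) * a = Real.sqrt μ₁ * Real.sqrt μ₂ := by
          rw [ha_def, mul_div_assoc', div_eq_iff hs₁.ne']
          linear_combination (-Real.sqrt (μ₂:ℝ)) * Real.mul_self_sqrt hμ₁R.le
        have h2 : (μ₂:ℝ) * b = Real.sqrt μ₁ * Real.sqrt μ₂ := by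
          rw [hb_def, mul_div_assoc', div_eq_iff hs₂.ne']
          linear_combination (-Real.sqrt (μ₁:ℝ)) * Real.mul_self_sqrt hμ₂R.le
        have e1 : (μ₁:ℝ) * (a - 1) = Real.sqrt μ₁ * Real.sqrt μ₂ - μ₁ := by
          rw [mul_sub, h1]; ring
        have e2 : (μ₂:ℝ) * (b - 1) = Real.sqrt μ₁ * Real.sqrt μ₂ - μ₂ := by
          rw [mul_sub, h2]; ring
        rw [e1, e2, sub_sq, hsq1, hsq2]; ring
end

section
/- Let Y_1, ..., Y_n be independent Poisson random variables with rates μ_1 ≤ μ_2 ≤ ... ≤ μ_n. For any δ > 0, if min_{1 ≤ i ≤ n-1}(√μ_{i+1} - √μ_i) > √(log((n-1)/δ)), then P(Y_1 ≤ Y_2 ≤ ... ≤ Y_n) > 1 - δ. -/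
open MeasureTheory ProbabilityTheory Real NNReal
open scoped ENNReal

lemma poissonMeasure_eq_toMeasure (r : ℝ≥0) : poissonMeasure r = (poissonPMF r).toMeasure := by
  rw [Measure.ext_iff_singleton]
  intro k
  rw [poissonMeasure_singleton, PMF.toMeasure_apply_singleton _ _ (measurableSet_singleton _),
    ← poissonPMFReal_ofReal_eq_poissonPMF, poissonPMFReal]

lemma poisson_mgf_sum (a : ℝ≥0) (s : ℝ) (hs : 0 ≤ s) :
    ∑' k : ℕ, ENNReal.ofReal (s ^ k) * poissonPMF a k
      = ENNReal.ofReal (Real.exp ((a : ℝ) * s - a)) := by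
  have hsum : HasSum (fun k : ℕ => ((a : ℝ) * s) ^ k / k.factorial) (Real.exp ((a:ℝ) * s)) := by
    rw [Real.exp_eq_exp_ℝ]
    exact NormedSpace.expSeries_div_hasSum_exp ((a : ℝ) * s)
  have hsum2 : HasSum (fun k : ℕ => s ^ k * poissonPMFReal a k)
      (Real.exp ((a:ℝ) * s - a)) := by
    have := hsum.mul_left (Real.exp (-(a:ℝ)))
    convert! this using 1
    · funext k
      unfold poissonPMFReal
      rw [mul_pow]
      ring
    · rw [← Real.exp_add]
      congr 1
      ring
  calc ∑' k : ℕ, ENNReal.ofReal (s ^ k) * poissonPMF a k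
      = ∑' k : ℕ, ENNReal.ofReal (s ^ k * poissonPMFReal a k) := by
        refine tsum_congr fun k => ?_
        have hk : poissonPMF a k = ENNReal.ofReal (poissonPMFReal a k) := rfl
        rw [hk, ← ENNReal.ofReal_mul (by positivity)]
    _ = ENNReal.ofReal (Real.exp ((a:ℝ) * s - a)) := by
        rw [← ENNReal.ofReal_tsum_of_nonneg (fun k => by
              have := poissonPMFReal_nonneg (r := a) (n := k); positivity)
            hsum2.summable, hsum2.tsum_eq]

lemma poisson_pair_bound {Ω : Type*} [MeasurableSpace Ω] (P : Measure Ω) [IsProbabilityMeasure P]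
    {X Z : Ω → ℕ} (hX : Measurable X) (hZ : Measurable Z)
    (hind : IndepFun X Z P) {a b : ℝ≥0} (ha : 0 < a) (hab : a ≤ b)
    (hlX : P.map X = poissonMeasure a) (hlZ : P.map Z = poissonMeasure b) :
    P {ω | Z ω < X ω} ≤
      ENNReal.ofReal (Real.exp (-(Real.sqrt b - Real.sqrt a) ^ 2)) := by
  have ha' : (0:ℝ) < a := ha
  have hb' : (0:ℝ) < b := lt_of_lt_of_le ha' hab
  set s : ℝ := Real.sqrt ((b:ℝ) / a) with hs_def
  have hs_pos : 0 < s := Real.sqrt_pos.mpr (by positivity)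
  have hs_one : 1 ≤ s := by
    rw [hs_def, show (1:ℝ) = Real.sqrt 1 by simp]
    exact Real.sqrt_le_sqrt ((one_le_div ha').mpr (by exact_mod_cast hab))
  set r : ℝ := s⁻¹ with hr_def
  have hr_pos : 0 < r := by positivity
  have hr_le : r ≤ 1 := by rw [hr_def]; exact inv_le_one_of_one_le₀ hs_one
  -- decompose the event
  have hcover : {ω | Z ω < X ω} = ⋃ j : ℕ, (Z ⁻¹' {j}) ∩ (X ⁻¹' Set.Ioi j) := by
    ext ω
    simp only [Set.mem_setOf_eq, Set.mem_iUnion, Set.mem_inter_iff, Set.mem_preimage,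
      Set.mem_singleton_iff, Set.mem_Ioi]
    exact ⟨fun h => ⟨Z ω, rfl, h⟩, fun ⟨j, hj, hj'⟩ => hj ▸ hj'⟩
  have hmeasnat : ∀ (s : Set ℕ), MeasurableSet s := fun s => s.to_countable.measurableSet
  have key : ∀ j : ℕ, P ((Z ⁻¹' {j}) ∩ (X ⁻¹' Set.Ioi j)) ≤
      (ENNReal.ofReal (Real.exp ((a:ℝ) * s - a)) * ENNReal.ofReal (r ^ (j+1)))
        * poissonPMF b j := by
    intro j
    have hZj : P (Z ⁻¹' {j}) = poissonPMF b j := by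
      rw [← Measure.map_apply hZ (hmeasnat _), hlZ, poissonMeasure_eq_toMeasure,
        PMF.toMeasure_apply_singleton _ _ (hmeasnat _)]
    have hXj : P (X ⁻¹' Set.Ioi j) ≤
        ENNReal.ofReal (Real.exp ((a:ℝ) * s - a)) * ENNReal.ofReal (r ^ (j+1)) := by
      rw [← Measure.map_apply hX (hmeasnat _), hlX, poissonMeasure_eq_toMeasure,
        PMF.toMeasure_apply _ (hmeasnat _)]
      have hterm : ∀ k : ℕ, (Set.Ioi j).indicator (poissonPMF a) k ≤
          (ENNReal.ofReal (s ^ k) * poissonPMF a k) * ENNReal.ofReal (r ^ (j+1)) := by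
        intro k
        rcases le_or_gt k j with hk | hk
        · rw [Set.indicator_of_notMem (by simpa using hk)]
          exact zero_le
        · rw [Set.indicator_of_mem (by simpa using hk)]
          have h1 : (1:ℝ≥0∞) ≤ ENNReal.ofReal (s ^ k) * ENNReal.ofReal (r ^ (j+1)) := by
            rw [← ENNReal.ofReal_mul (by positivity), ← ENNReal.ofReal_one]
            apply ENNReal.ofReal_le_ofReal
            rw [hr_def, inv_pow, ← div_eq_mul_inv, le_div_iff₀ (by positivity), one_mul]
            exact pow_le_pow_right₀ hs_one hk
          calc poissonPMF a k = 1 * poissonPMF a k := (one_mul _).symm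
            _ ≤ (ENNReal.ofReal (s ^ k) * ENNReal.ofReal (r ^ (j+1))) * poissonPMF a k :=
                mul_le_mul_left h1 _
            _ = (ENNReal.ofReal (s ^ k) * poissonPMF a k) * ENNReal.ofReal (r ^ (j+1)) := by
                ring
      calc ∑' k : ℕ, (Set.Ioi j).indicator (poissonPMF a) k
          ≤ ∑' k : ℕ, (ENNReal.ofReal (s ^ k) * poissonPMF a k) * ENNReal.ofReal (r ^ (j+1)) :=
            ENNReal.tsum_le_tsum hterm
        _ = (∑' k : ℕ, ENNReal.ofReal (s ^ k) * poissonPMF a k) * ENNReal.ofReal (r ^ (j+1)) :=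
            ENNReal.tsum_mul_right
        _ = ENNReal.ofReal (Real.exp ((a:ℝ) * s - a)) * ENNReal.ofReal (r ^ (j+1)) := by
            rw [poisson_mgf_sum a s hs_pos.le]
    calc P ((Z ⁻¹' {j}) ∩ (X ⁻¹' Set.Ioi j))
        = P (X ⁻¹' Set.Ioi j) * P (Z ⁻¹' {j}) := by
          rw [Set.inter_comm]
          exact hind.measure_inter_preimage_eq_mul _ _ (hmeasnat _) (hmeasnat _)
      _ ≤ _ := by rw [hZj]; exact mul_le_mul_left hXj _
  calc P {ω | Z ω < X ω} ≤ ∑' j : ℕ, P ((Z ⁻¹' {j}) ∩ (X ⁻¹' Set.Ioi j)) := by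
        rw [hcover]; exact measure_iUnion_le _
    _ ≤ ∑' j : ℕ, (ENNReal.ofReal (Real.exp ((a:ℝ) * s - a)) * ENNReal.ofReal (r ^ (j+1)))
        * poissonPMF b j := ENNReal.tsum_le_tsum key
    _ = ENNReal.ofReal (Real.exp ((a:ℝ) * s - a)) * (ENNReal.ofReal r *
          ∑' j : ℕ, ENNReal.ofReal (r ^ j) * poissonPMF b j) := by
        rw [← ENNReal.tsum_mul_left, ← ENNReal.tsum_mul_left]
        refine tsum_congr fun j => ?_
        rw [pow_succ, ENNReal.ofReal_mul (by positivity)]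
        ring
    _ ≤ ENNReal.ofReal (Real.exp ((a:ℝ) * s - a)) * (1 *
          ∑' j : ℕ, ENNReal.ofReal (r ^ j) * poissonPMF b j) := by
        gcongr
        exact ENNReal.ofReal_le_one.mpr hr_le
    _ = ENNReal.ofReal (Real.exp ((a:ℝ) * s - a)) * ENNReal.ofReal (Real.exp ((b:ℝ) * r - b)) := by
        rw [one_mul, poisson_mgf_sum b r hr_pos.le]
    _ = ENNReal.ofReal (Real.exp (-(Real.sqrt b - Real.sqrt a) ^ 2)) := by
        rw [← ENNReal.ofReal_mul (by positivity), ← Real.exp_add]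
        congr 1
        have e1 : (a:ℝ) * s = Real.sqrt a * Real.sqrt b := by
          calc (a:ℝ) * s = Real.sqrt ((a:ℝ)^2) * Real.sqrt ((b:ℝ)/a) := by
                rw [Real.sqrt_sq ha'.le, hs_def]
            _ = Real.sqrt ((a:ℝ)^2 * ((b:ℝ)/a)) := (Real.sqrt_mul (by positivity) _).symm
            _ = Real.sqrt ((a:ℝ) * b) := by congr 1; field_simp
            _ = Real.sqrt a * Real.sqrt b := Real.sqrt_mul ha'.le _
        have e2 : (b:ℝ) * r = Real.sqrt a * Real.sqrt b := by
          calc (b:ℝ) * r = Real.sqrt ((b:ℝ)^2) * Real.sqrt ((a:ℝ)/b) := by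
                rw [Real.sqrt_sq hb'.le, hr_def, hs_def, ← Real.sqrt_inv, inv_div]
            _ = Real.sqrt ((b:ℝ)^2 * ((a:ℝ)/b)) := (Real.sqrt_mul (by positivity) _).symm
            _ = Real.sqrt ((a:ℝ) * b) := by congr 1; field_simp
            _ = Real.sqrt a * Real.sqrt b := Real.sqrt_mul ha'.le _
        rw [e1, e2]
        congr 1
        have hA : Real.sqrt a ^ 2 = (a:ℝ) := Real.sq_sqrt ha'.le
        have hB : Real.sqrt b ^ 2 = (b:ℝ) := Real.sq_sqrt hb'.le
        linear_combination hA + hB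

lemma real_term_bound (m : ℕ) (hm : 1 ≤ m) (δ : ℝ) (hδ : 0 < δ) (g : ℝ)
    (hg : g > Real.sqrt (Real.log (m / δ))) : Real.exp (-g ^ 2) < δ / m := by
  have hm' : (0:ℝ) < m := by exact_mod_cast hm
  have hg0 : 0 < g := (Real.sqrt_nonneg _).trans_lt hg
  rcases le_or_gt 0 (Real.log ((m:ℝ) / δ)) with hL | hL
  · have h2 : Real.log ((m:ℝ)/δ) < g ^ 2 := by
      have h3 := Real.sq_sqrt hL
      nlinarith [Real.sqrt_nonneg (Real.log ((m:ℝ)/δ))]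
    calc Real.exp (-g ^ 2) < Real.exp (-(Real.log ((m:ℝ)/δ))) := by
          apply Real.exp_lt_exp.mpr; linarith
      _ = δ / m := by
          rw [Real.exp_neg, Real.exp_log (by positivity), inv_div]
  · have h1 : (m:ℝ)/δ < 1 := (Real.log_neg_iff (by positivity)).mp hL
    have h2 : (1:ℝ) < δ / m := by
      rw [lt_div_iff₀ hm']
      have := (div_lt_one hδ).mp h1
      linarith
    calc Real.exp (-g ^ 2) < 1 := by
          rw [← Real.exp_zero]; apply Real.exp_lt_exp.mpr; nlinarith
      _ < δ / m := h2

/-- If `Y₀, …, Y_{n-1}` are independent Poisson variables with nondecreasing rates `μ i`, and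
all adjacent gaps of square-root rates exceed `√(log((n-1)/δ))`, then
`P(Y₀ ≤ Y₁ ≤ ⋯ ≤ Y_{n-1}) > 1 - δ`. -/
theorem stmt3 {Ω : Type*} [MeasurableSpace Ω] (P : Measure Ω) [IsProbabilityMeasure P]
    (n : ℕ) (Y : ℕ → Ω → ℕ) (μ : ℕ → ℝ≥0) (δ : ℝ) (hδ : 0 < δ)
    (hpos : ∀ i < n, 0 < μ i)
    (hlaw : ∀ i < n, P.map (Y i) = poissonMeasure (μ i))
    (hmeas : ∀ i, Measurable (Y i))
    (hindep : iIndepFun Y P)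
    (hmono : ∀ i j, i ≤ j → j < n → μ i ≤ μ j)
    (hgap : ∀ i, i + 1 < n →
      Real.sqrt (μ (i + 1)) - Real.sqrt (μ i) > Real.sqrt (Real.log ((n - 1 : ℝ) / δ))) :
    P {ω | ∀ i, i + 1 < n → Y i ω ≤ Y (i + 1) ω} > 1 - ENNReal.ofReal δ := by
  have hmeasnat : ∀ (α : Type) [Countable α] (s : Set α), @MeasurableSet α ⊤ s :=
    fun α _ s => trivial
  set E : Set Ω := {ω | ∀ i, i + 1 < n → Y i ω ≤ Y (i + 1) ω} with hE_def
  have hEmeas : MeasurableSet E := by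
    have : E = ⋂ i : ℕ, ⋂ (_ : i + 1 < n),
        (fun ω => (Y i ω, Y (i+1) ω)) ⁻¹' {p : ℕ × ℕ | p.1 ≤ p.2} := by
      ext ω; simp [hE_def, Set.mem_iInter]
    rw [this]
    exact MeasurableSet.iInter fun i => MeasurableSet.iInter fun hi =>
      ((hmeas i).prodMk (hmeas (i+1))) ((Set.to_countable _).measurableSet)
  by_cases hδ1 : (1:ℝ≥0∞) ≤ ENNReal.ofReal δ
  · -- trivial case: RHS is zero, show positivity
    rw [tsub_eq_zero_of_le hδ1]
    have hsub : (⋂ i ∈ Finset.range n, Y i ⁻¹' {0}) ⊆ E := by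
      intro ω hω i hi
      simp only [Set.mem_iInter, Set.mem_preimage, Set.mem_singleton_iff, Finset.mem_range] at hω
      rw [hω i (by omega), hω (i+1) hi]
    refine lt_of_lt_of_le ?_ (measure_mono hsub)
    rw [hindep.measure_inter_preimage_eq_mul (Finset.range n)
      (sets := fun _ => ({0} : Set ℕ)) (fun i _ => trivial)]
    rw [pos_iff_ne_zero]
    rw [Finset.prod_ne_zero_iff]
    intro i hi
    rw [Finset.mem_range] at hi
    rw [← Measure.map_apply (hmeas i) trivial, hlaw i hi, poissonMeasure_eq_toMeasure,
      PMF.toMeasure_apply_singleton _ _ (measurableSet_singleton _)]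
    have : poissonPMF (μ i) 0 = ENNReal.ofReal (poissonPMFReal (μ i) 0) := rfl
    rw [this]
    simp only [ne_eq, ENNReal.ofReal_eq_zero, not_le]
    exact poissonPMFReal_pos (hpos i hi)
  · push_neg at hδ1
    -- union bound
    set m := n - 1 with hm_def
    have hEc : P Eᶜ < ENNReal.ofReal δ := by
      have hsub : Eᶜ ⊆ ⋃ i ∈ Finset.range m, {ω | Y (i+1) ω < Y i ω} := by
        intro ω hω
        simp only [hE_def, Set.mem_compl_iff, Set.mem_setOf_eq, not_forall] at hω
        obtain ⟨i, hi, hlt⟩ := hω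
        simp only [Set.mem_iUnion, Finset.mem_range, Set.mem_setOf_eq]
        exact ⟨i, by omega, by omega⟩
      rcases Nat.eq_zero_or_pos m with hm0 | hm1
      · refine lt_of_le_of_lt (measure_mono hsub) ?_
        simp [hm0]
        positivity
      · calc P Eᶜ ≤ ∑ i ∈ Finset.range m, P {ω | Y (i+1) ω < Y i ω} :=
              (measure_mono hsub).trans (measure_biUnion_finset_le _ _)
          _ ≤ ∑ i ∈ Finset.range m,
                ENNReal.ofReal (Real.exp (-(Real.sqrt (μ (i+1)) - Real.sqrt (μ i)) ^ 2)) := by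
              refine Finset.sum_le_sum fun i hi => ?_
              rw [Finset.mem_range] at hi
              have hin : i + 1 < n := by omega
              exact poisson_pair_bound P (hmeas i) (hmeas (i+1))
                  (hindep.indepFun (by omega)) (hpos i (by omega))
                  (hmono i (i+1) (by omega) hin) (hlaw i (by omega)) (hlaw (i+1) hin)
          _ = ENNReal.ofReal (∑ i ∈ Finset.range m,
                Real.exp (-(Real.sqrt (μ (i+1)) - Real.sqrt (μ i)) ^ 2)) :=
              (ENNReal.ofReal_sum_of_nonneg fun i _ => (Real.exp_pos _).le).symm
          _ < ENNReal.ofReal δ := by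
              apply ENNReal.ofReal_lt_ofReal_iff hδ |>.mpr
              have hcast : ((m:ℝ)) = (n:ℝ) - 1 := by
                rw [hm_def]
                push_cast [Nat.cast_sub (by omega : 1 ≤ n)]
                ring
              calc ∑ i ∈ Finset.range m,
                    Real.exp (-(Real.sqrt (μ (i+1)) - Real.sqrt (μ i)) ^ 2)
                  < ∑ i ∈ Finset.range m, δ / m := by
                    refine Finset.sum_lt_sum_of_nonempty (Finset.nonempty_range_iff.mpr hm1.ne') fun i hi => ?_
                    rw [Finset.mem_range] at hi
                    have hin : i + 1 < n := by omega
                    apply real_term_bound m hm1 δ hδ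
                    rw [hcast]
                    exact hgap i hin
                _ = δ := by
                    rw [Finset.sum_const, Finset.card_range, nsmul_eq_mul]
                    have : (m:ℝ) ≠ 0 := by positivity
                    field_simp
    have hPE : P E = 1 - P Eᶜ := by
      have := prob_compl_eq_one_sub (μ := P) hEmeas.compl
      rwa [compl_compl] at this
    rw [hPE]
    have hlt : (1:ℝ≥0∞) < (1 - P Eᶜ) + ENNReal.ofReal δ := by
      calc (1:ℝ≥0∞) = (1 - P Eᶜ) + P Eᶜ := (tsub_add_cancel_of_le prob_le_one).symm
        _ < (1 - P Eᶜ) + ENNReal.ofReal δ :=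
            ENNReal.add_lt_add_left (by finiteness) hEc
    exact ENNReal.sub_lt_of_lt_add hδ1.le hlt
end

section
/- Let Y_1 ~ Gamma(ν, μ_1) and Y_2 ~ Gamma(ν, μ_2) be independent Gamma random variables with common shape ν > 0, means μ_1 ≤ μ_2. Then P(Y_1 > Y_2) ≤ (μ_2/(4μ_1) + μ_1/(4μ_2) + 1/2)^{-ν}. -/
open MeasureTheory ProbabilityTheory Real

open Set in
lemma gamma_mgf_aux {a r t : ℝ} (ha : 0 < a) (hr : 0 < r) (ht : t < r) :
    ∫⁻ x, ENNReal.ofReal (Real.exp (t * x)) ∂(gammaMeasure a r)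
      = ENNReal.ofReal ((r / (r - t)) ^ a) := by
  have hrt : 0 < r - t := by linarith
  rw [gammaMeasure, lintegral_withDensity_eq_lintegral_mul _
    (show Measurable (gammaPDF a r) from (measurable_gammaPDFReal a r).ennreal_ofReal) (by fun_prop)]
  have hsplit : ∀ x : ℝ, (gammaPDF a r * fun x => ENNReal.ofReal (Real.exp (t * x))) x
      = (Ici (0:ℝ)).indicator
        (fun x => ENNReal.ofReal (r ^ a / Real.Gamma a * (x ^ (a-1) * Real.exp (-((r-t) * x))))) x := by
    intro x
    by_cases hx : 0 ≤ x
    · rw [Set.indicator_of_mem (mem_Ici.mpr hx)]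
      simp only [Pi.mul_apply, gammaPDF_eq, if_pos hx]
      rw [← ENNReal.ofReal_mul (by positivity)]
      congr 1
      rw [mul_assoc, mul_assoc, ← Real.exp_add]
      ring_nf
    · rw [Set.indicator_of_notMem (by simpa using hx)]
      simp only [Pi.mul_apply, gammaPDF_eq, if_neg hx]
      simp
  simp_rw [hsplit]
  rw [lintegral_indicator measurableSet_Ici, ← setLIntegral_congr Ioi_ae_eq_Ici]
  have hint : IntegrableOn (fun x : ℝ => r ^ a / Real.Gamma a * (x ^ (a-1) * Real.exp (-((r-t) * x)))) (Ioi 0) := by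
    apply Integrable.const_mul
    have := integrableOn_rpow_mul_exp_neg_mul_rpow (p := 1) (s := a - 1) (b := r - t)
      (by linarith) one_pos hrt
    refine this.congr_fun (fun x hx => ?_) measurableSet_Ioi
    beta_reduce
    rw [Real.rpow_one, neg_mul]
  rw [← ofReal_integral_eq_lintegral_ofReal hint]
  · rw [integral_const_mul, integral_rpow_mul_exp_neg_mul_Ioi ha hrt]
    congr 1
    rw [div_rpow hr.le hrt.le, div_rpow (by norm_num) hrt.le, Real.one_rpow]
    field_simp
  · filter_upwards [self_mem_ae_restrict measurableSet_Ioi] with x hx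
    have : (0:ℝ) < x := hx
    positivity


/-- If `Y₁ ~ Gamma(ν, μ₁)`, `Y₂ ~ Gamma(ν, μ₂)` (shape `ν`, mean `μᵢ`, i.e. rate `ν/μᵢ`)
are independent with `μ₁ ≤ μ₂`, then
`P(Y₁ > Y₂) ≤ (μ₂/(4μ₁) + μ₁/(4μ₂) + 1/2)^{-ν}`. -/
theorem stmt4 {Ω : Type*} [MeasurableSpace Ω] (P : Measure Ω) [IsProbabilityMeasure P]
    (Y₁ Y₂ : Ω → ℝ) (ν μ₁ μ₂ : ℝ) (hν : 0 < ν) (hμ₁ : 0 < μ₁) (hμ : μ₁ ≤ μ₂)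
    (hY₁ : P.map Y₁ = gammaMeasure ν (ν / μ₁))
    (hY₂ : P.map Y₂ = gammaMeasure ν (ν / μ₂))
    (hmeas₁ : Measurable Y₁) (hmeas₂ : Measurable Y₂)
    (hindep : IndepFun Y₁ Y₂ P) :
    P {ω | Y₂ ω < Y₁ ω} ≤
      ENNReal.ofReal ((μ₂ / (4 * μ₁) + μ₁ / (4 * μ₂) + 1 / 2) ^ (-ν : ℝ)) := by
  have hμ₂ : 0 < μ₂ := lt_of_lt_of_le hμ₁ hμ
  set t : ℝ := ν / (2 * μ₁) - ν / (2 * μ₂) with ht_def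
  have ht0 : 0 ≤ t := by
    rw [ht_def, sub_nonneg]
    gcongr
  have hS₁ : ν / μ₁ - t = ν / (2 * μ₁) + ν / (2 * μ₂) := by rw [ht_def]; field_simp; ring
  have hS₂ : ν / μ₂ - -t = ν / (2 * μ₁) + ν / (2 * μ₂) := by rw [ht_def]; field_simp; ring
  have hSpos : (0:ℝ) < ν / (2 * μ₁) + ν / (2 * μ₂) := by positivity
  have ht1 : t < ν / μ₁ := by linarith [hS₁, hSpos]
  have ht2 : -t < ν / μ₂ := by linarith [hS₂, hSpos]
  have hmf : Measurable fun x : ℝ => ENNReal.ofReal (Real.exp (t * x)) := by fun_prop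
  have hmg : Measurable fun x : ℝ => ENNReal.ofReal (Real.exp (-t * x)) := by fun_prop
  have step1 : P {ω | Y₂ ω < Y₁ ω} ≤
      ∫⁻ ω, ((fun ω => ENNReal.ofReal (Real.exp (t * Y₁ ω))) *
        (fun ω => ENNReal.ofReal (Real.exp (-t * Y₂ ω)))) ω ∂P := by
    have hms : MeasurableSet {ω | Y₂ ω < Y₁ ω} := measurableSet_lt hmeas₂ hmeas₁
    calc P {ω | Y₂ ω < Y₁ ω} = ∫⁻ _ in {ω | Y₂ ω < Y₁ ω}, 1 ∂P := by
          rw [setLIntegral_one]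
      _ ≤ ∫⁻ ω in {ω | Y₂ ω < Y₁ ω}, ((fun ω => ENNReal.ofReal (Real.exp (t * Y₁ ω))) *
            (fun ω => ENNReal.ofReal (Real.exp (-t * Y₂ ω)))) ω ∂P := by
          refine setLIntegral_mono ((hmf.comp hmeas₁).mul (hmg.comp hmeas₂)) fun ω hω => ?_
          simp only [Pi.mul_apply]
          rw [← ENNReal.ofReal_mul (Real.exp_nonneg _), ← Real.exp_add]
          refine ENNReal.one_le_ofReal.mpr (Real.one_le_exp ?_)
          nlinarith [show Y₂ ω < Y₁ ω from hω]
      _ ≤ _ := lintegral_mono' Measure.restrict_le_self le_rfl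
  have step2 : (∫⁻ ω, ((fun ω => ENNReal.ofReal (Real.exp (t * Y₁ ω))) *
        (fun ω => ENNReal.ofReal (Real.exp (-t * Y₂ ω)))) ω ∂P) =
      (∫⁻ ω, ENNReal.ofReal (Real.exp (t * Y₁ ω)) ∂P) *
        ∫⁻ ω, ENNReal.ofReal (Real.exp (-t * Y₂ ω)) ∂P :=
    lintegral_mul_eq_lintegral_mul_lintegral_of_indepFun (hmf.comp hmeas₁)
      (hmg.comp hmeas₂) (hindep.comp hmf hmg)
  have e1 : (∫⁻ ω, ENNReal.ofReal (Real.exp (t * Y₁ ω)) ∂P) =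
      ENNReal.ofReal ((ν / μ₁ / (ν / μ₁ - t)) ^ ν) := by
    rw [← lintegral_map hmf hmeas₁, hY₁, gamma_mgf_aux hν (by positivity) ht1]
  have e2 : (∫⁻ ω, ENNReal.ofReal (Real.exp (-t * Y₂ ω)) ∂P) =
      ENNReal.ofReal ((ν / μ₂ / (ν / μ₂ - -t)) ^ ν) := by
    rw [← lintegral_map hmg hmeas₂, hY₂, gamma_mgf_aux hν (by positivity) ht2]
  have hC : (0:ℝ) < μ₂ / (4 * μ₁) + μ₁ / (4 * μ₂) + 1 / 2 := by positivity
  have hA : (0:ℝ) < ν / μ₁ / (ν / μ₁ - t) := by rw [hS₁]; positivity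
  have hB : (0:ℝ) < ν / μ₂ / (ν / μ₂ - -t) := by rw [hS₂]; positivity
  have hAB : (ν / μ₁ / (ν / μ₁ - t)) * (ν / μ₂ / (ν / μ₂ - -t)) =
      (μ₂ / (4 * μ₁) + μ₁ / (4 * μ₂) + 1 / 2)⁻¹ := by
    rw [hS₁, hS₂]
    field_simp
    ring
  calc P {ω | Y₂ ω < Y₁ ω} ≤ _ := step1
    _ = _ := step2
    _ = ENNReal.ofReal ((μ₂ / (4 * μ₁) + μ₁ / (4 * μ₂) + 1 / 2) ^ (-ν : ℝ)) := by
        rw [e1, e2, ← ENNReal.ofReal_mul (by positivity), ← Real.mul_rpow hA.le hB.le, hAB,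
          Real.inv_rpow hC.le, ← Real.rpow_neg hC.le]
end

section
/- Let Y_1, ..., Y_n be independent Gamma random variables with common shape ν > 0 and means μ_1 ≤ ... ≤ μ_n. For any δ > 0, if min_{1 ≤ i ≤ n-1} μ_{i+1}/μ_i > 4((n-1)/δ)^{1/ν}, then P(Y_1 ≤ Y_2 ≤ ... ≤ Y_n) > 1 - δ. -/
open MeasureTheory ProbabilityTheory Real

lemma stmt5_mgf (ν r s : ℝ) (hν : 0 < ν) (hr : 0 < r) (hs : s < r) :
    ∫⁻ x, ENNReal.ofReal (exp (s * x)) * gammaPDF ν r x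
      = ENNReal.ofReal ((r / (r - s)) ^ ν) := by
  have hrs : (0:ℝ) < r - s := by linarith
  have hpt : ∀ x, ENNReal.ofReal (exp (s * x)) * gammaPDF ν r x
      = ENNReal.ofReal ((r / (r - s)) ^ ν) * gammaPDF ν (r - s) x := by
    intro x
    rcases lt_or_ge x 0 with hx | hx
    · rw [gammaPDF_of_neg hx, gammaPDF_of_neg hx, mul_zero, mul_zero]
    · rw [gammaPDF_of_nonneg hx, gammaPDF_of_nonneg hx,
        ← ENNReal.ofReal_mul (exp_nonneg _),
        ← ENNReal.ofReal_mul (rpow_nonneg (by positivity) _)]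
      congr 1
      have h1 : (r / (r - s)) ^ ν * (r - s) ^ ν = r ^ ν := by
        rw [div_rpow hr.le hrs.le, div_mul_cancel₀]
        exact (rpow_pos_of_pos hrs ν).ne'
      have h2 : exp (s * x) * exp (-(r * x)) = exp (-((r - s) * x)) := by
        rw [← exp_add]; ring_nf
      calc exp (s * x) * (r ^ ν / Gamma ν * x ^ (ν - 1) * exp (-(r * x)))
          = ((r / (r - s)) ^ ν * (r - s) ^ ν) / Gamma ν * x ^ (ν - 1)
            * (exp (s * x) * exp (-(r * x))) := by rw [h1]; ring
        _ = (r / (r - s)) ^ ν * ((r - s) ^ ν / Gamma ν * x ^ (ν - 1) * exp (-((r - s) * x))) := by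
            rw [h2]; ring
  simp_rw [hpt]
  rw [lintegral_const_mul _ (by
      exact (measurable_gammaPDFReal ν (r - s)).ennreal_ofReal),
    lintegral_gammaPDF_eq_one hν hrs, mul_one]

lemma stmt5_pair {Ω : Type*} [MeasurableSpace Ω] (P : Measure Ω) [IsProbabilityMeasure P]
    (X Z : Ω → ℝ) (hX : Measurable X) (hZ : Measurable Z)
    (hind : IndepFun X Z P) (ν b₁ b₂ : ℝ) (hν : 0 < ν) (hb2 : 0 < b₂) (hb : b₂ ≤ b₁)
    (hlX : P.map X = gammaMeasure ν b₁) (hlZ : P.map Z = gammaMeasure ν b₂) :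
    P {ω | Z ω < X ω} ≤ ENNReal.ofReal ((4 * b₁ * b₂ / (b₁ + b₂) ^ 2) ^ ν) := by
  have hb1 : 0 < b₁ := lt_of_lt_of_le hb2 hb
  set s : ℝ := (b₁ - b₂) / 2 with hs_def
  have hs0 : 0 ≤ s := by simp only [hs_def]; linarith
  set f : Ω → ENNReal := fun ω => ENNReal.ofReal (exp (s * X ω)) with hf_def
  set g : Ω → ENNReal := fun ω => ENNReal.ofReal (exp (-s * Z ω)) with hg_def
  have hfm : Measurable f := ((hX.const_mul s).exp).ennreal_ofReal
  have hgm : Measurable g := ((hZ.const_mul (-s)).exp).ennreal_ofReal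
  have hset : MeasurableSet {ω | Z ω < X ω} := measurableSet_lt hZ hX
  -- Markov step
  have h1 : P {ω | Z ω < X ω} ≤ ∫⁻ ω, f ω * g ω ∂P := by
    have : P {ω | Z ω < X ω} = ∫⁻ ω in {ω | Z ω < X ω}, 1 ∂P := by
      rw [setLIntegral_one]
    rw [this]
    refine le_trans (setLIntegral_mono (hfm.mul hgm) ?_) (setLIntegral_le_lintegral _ _)
    intro ω hω
    have hω' : Z ω < X ω := hω
    rw [hf_def, hg_def]
    simp only [Pi.mul_apply]
    rw [← ENNReal.ofReal_mul (exp_nonneg _), ← exp_add]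
    have : (0:ℝ) ≤ s * X ω + -s * Z ω := by nlinarith
    calc (1:ENNReal) = ENNReal.ofReal (exp 0) := by simp
      _ ≤ ENNReal.ofReal (exp (s * X ω + -s * Z ω)) := by
          exact ENNReal.ofReal_le_ofReal (exp_le_exp.2 (by linarith))
  -- independence
  have h2 : ∫⁻ ω, f ω * g ω ∂P = (∫⁻ ω, f ω ∂P) * ∫⁻ ω, g ω ∂P := by
    refine lintegral_mul_eq_lintegral_mul_lintegral_of_indepFun hfm hgm ?_
    exact hind.comp (Measurable.ennreal_ofReal ((measurable_id.const_mul s).exp))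
      (Measurable.ennreal_ofReal ((measurable_id.const_mul (-s)).exp))
  -- compute each factor
  have key : ∀ (W : Ω → ℝ) (hW : Measurable W) (b t : ℝ), 0 < b → t < b →
      P.map W = gammaMeasure ν b →
      ∫⁻ ω, ENNReal.ofReal (exp (t * W ω)) ∂P = ENNReal.ofReal ((b / (b - t)) ^ ν) := by
    intro W hW b t hb ht hl
    have hm : Measurable fun x : ℝ => ENNReal.ofReal (exp (t * x)) :=
      Measurable.ennreal_ofReal (by fun_prop)
    have : ∫⁻ ω, ENNReal.ofReal (exp (t * W ω)) ∂P
        = ∫⁻ x, ENNReal.ofReal (exp (t * x)) ∂(P.map W) := by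
      rw [lintegral_map hm hW]
    rw [this, hl, gammaMeasure,
      lintegral_withDensity_eq_lintegral_mul _ (show Measurable (gammaPDF ν b) from (measurable_gammaPDFReal ν b).ennreal_ofReal) hm]
    have := stmt5_mgf ν b t hν hb ht
    rw [← this]
    congr 1
    ext x
    simp [mul_comm]
  have hf_int : ∫⁻ ω, f ω ∂P = ENNReal.ofReal ((b₁ / (b₁ - s)) ^ ν) :=
    key X hX b₁ s hb1 (by simp only [hs_def]; linarith) hlX
  have hg_int : ∫⁻ ω, g ω ∂P = ENNReal.ofReal ((b₂ / (b₂ - -s)) ^ ν) :=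
    key Z hZ b₂ (-s) hb2 (by simp only [hs_def]; linarith) hlZ
  refine le_trans h1 ?_
  have e1 : b₁ - s = (b₁ + b₂) / 2 := by simp only [hs_def]; ring
  have e2 : b₂ - -s = (b₁ + b₂) / 2 := by simp only [hs_def]; ring
  rw [h2, hf_int, hg_int, e1, e2, ← ENNReal.ofReal_mul (by positivity)]
  apply ENNReal.ofReal_le_ofReal
  rw [← mul_rpow (by positivity) (by positivity)]
  apply le_of_eq
  congr 1
  field_simp
  ring

lemma stmt5_gamma_pos (ν r a b : ℝ) (hν : 0 < ν) (hr : 0 < r) (ha : 0 ≤ a) (hab : a < b) :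
    0 < gammaMeasure ν r (Set.Ioo a b) := by
  rw [gammaMeasure, withDensity_apply _ measurableSet_Ioo]
  rw [lintegral_pos_iff_support (show Measurable (gammaPDF ν r) from (measurable_gammaPDFReal ν r).ennreal_ofReal)]
  have hsub : Set.Ioo a b ⊆ Function.support (gammaPDF ν r) := by
    intro x hx
    have hx0 : 0 < x := lt_of_le_of_lt ha hx.1
    have := gammaPDFReal_pos hν hr hx0
    simp only [Function.mem_support, gammaPDF, ne_eq, ENNReal.ofReal_eq_zero, not_le]
    exact this
  calc (0:ENNReal) < ENNReal.ofReal (b - a) := by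
        rw [ENNReal.ofReal_pos]; linarith
    _ = (volume.restrict (Set.Ioo a b)) (Set.Ioo a b) := by
        rw [Measure.restrict_apply_self, Real.volume_Ioo]
    _ ≤ _ := measure_mono hsub

/-- If `Y₀, …, Y_{n-1}` are independent Gamma variables with common shape `ν` and nondecreasing
means `μ i` (rate `ν / μ i`), and all adjacent ratios exceed `4((n-1)/δ)^{1/ν}`, then
`P(Y₀ ≤ Y₁ ≤ ⋯ ≤ Y_{n-1}) > 1 - δ`. -/
theorem stmt5 {Ω : Type*} [MeasurableSpace Ω] (P : Measure Ω) [IsProbabilityMeasure P]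
    (n : ℕ) (Y : ℕ → Ω → ℝ) (μ : ℕ → ℝ) (ν δ : ℝ) (hν : 0 < ν) (hδ : 0 < δ)
    (hpos : ∀ i < n, 0 < μ i)
    (hlaw : ∀ i < n, P.map (Y i) = gammaMeasure ν (ν / μ i))
    (hmeas : ∀ i, Measurable (Y i))
    (hindep : iIndepFun Y P)
    (hmono : ∀ i j, i ≤ j → j < n → μ i ≤ μ j)
    (hgap : ∀ i, i + 1 < n →
      μ (i + 1) / μ i > 4 * ((n - 1 : ℝ) / δ) ^ ((1 : ℝ) / ν)) :
    P {ω | ∀ i, i + 1 < n → Y i ω ≤ Y (i + 1) ω} > 1 - ENNReal.ofReal δ := by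
  set G := {ω | ∀ i, i + 1 < n → Y i ω ≤ Y (i + 1) ω} with hG_def
  have hGm : MeasurableSet G := by
    have hEq : G = ⋂ i, ⋂ (_ : i + 1 < n), {ω | Y i ω ≤ Y (i + 1) ω} := by
      ext ω; simp [hG_def, Set.mem_iInter]
    rw [hEq]
    exact MeasurableSet.iInter fun i => MeasurableSet.iInter fun _ =>
      measurableSet_le (hmeas i) (hmeas (i + 1))
  rcases le_or_gt n 1 with hn | hn
  · have hEq : G = Set.univ := by
      ext ω
      simp only [hG_def, Set.mem_setOf_eq, Set.mem_univ, iff_true]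
      intro i hi; omega
    rw [hEq, measure_univ]
    exact ENNReal.sub_lt_self ENNReal.one_ne_top one_ne_zero (ENNReal.ofReal_pos.mpr hδ).ne'
  -- now n ≥ 2
  have hn2 : (2:ℝ) ≤ (n:ℝ) := by exact_mod_cast hn
  -- positivity of P G
  have hGpos : 0 < P G := by
    have hsub : (⋂ i ∈ Finset.range n, Y i ⁻¹' Set.Ioo (2*(i:ℝ)) (2*(i:ℝ)+1)) ⊆ G := by
      intro ω hω
      simp only [Set.mem_iInter, Finset.mem_range] at hω
      intro i hi
      have h1 := hω i (by omega)
      have h2 := hω (i+1) hi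
      simp only [Set.mem_preimage, Set.mem_Ioo] at h1 h2
      push_cast at h1 h2
      linarith [h1.2, h2.1]
    have hprod := hindep.meas_biInter (S := Finset.range n)
      (s := fun i => Y i ⁻¹' Set.Ioo (2*(i:ℝ)) (2*(i:ℝ)+1))
      (fun i _ => ⟨Set.Ioo (2*(i:ℝ)) (2*(i:ℝ)+1), measurableSet_Ioo, rfl⟩)
    refine lt_of_lt_of_le ?_ (measure_mono hsub)
    rw [hprod]
    refine CanonicallyOrderedAdd.prod_pos.mpr fun i hi => ?_
    have hi' : i < n := Finset.mem_range.mp hi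
    rw [← Measure.map_apply (hmeas i) measurableSet_Ioo, hlaw i hi']
    exact stmt5_gamma_pos ν (ν / μ i) (2*(i:ℝ)) (2*(i:ℝ)+1) hν
      (div_pos hν (hpos i hi')) (by positivity) (by linarith)
  -- union bound
  have hBlt : P Gᶜ < ENNReal.ofReal δ := by
    set B : ℕ → ℝ := fun i =>
      (4 * (ν / μ i) * (ν / μ (i+1)) / ((ν / μ i) + (ν / μ (i+1)))^2) ^ ν with hB_def
    have hBsub : Gᶜ ⊆ ⋃ i ∈ Finset.range (n-1), {ω | Y (i+1) ω < Y i ω} := by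
      intro ω hω
      simp only [hG_def, Set.mem_compl_iff, Set.mem_setOf_eq] at hω
      push_neg at hω
      obtain ⟨i, hi, hlt⟩ := hω
      simp only [Set.mem_iUnion, Finset.mem_range]
      exact ⟨i, by omega, hlt⟩
    have hpairs : ∀ i ∈ Finset.range (n-1),
        P {ω | Y (i+1) ω < Y i ω} ≤ ENNReal.ofReal (B i) := by
      intro i hi
      have hi' : i + 1 < n := by have := Finset.mem_range.mp hi; omega
      have hμi := hpos i (by omega)
      have hμi1 := hpos (i+1) hi'
      refine stmt5_pair P (Y i) (Y (i+1)) (hmeas i) (hmeas (i+1))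
        (hindep.indepFun (by omega)) ν (ν / μ i) (ν / μ (i+1)) hν
        (div_pos hν hμi1) ?_ (hlaw i (by omega)) (hlaw (i+1) hi')
      gcongr
      exact hmono i (i+1) (by omega) hi'
    have hBreal : ∀ i ∈ Finset.range (n-1), B i < δ / ((n:ℝ) - 1) := by
      intro i hi
      have hi' : i + 1 < n := by have := Finset.mem_range.mp hi; omega
      have hμi := hpos i (by omega)
      have hμi1 := hpos (i+1) hi'
      have hb1 : 0 < ν / μ i := div_pos hν hμi
      have hb2 : 0 < ν / μ (i+1) := div_pos hν hμi1
      set w : ℝ := ((n:ℝ) - 1) / δ with hw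
      have hwpos : 0 < w := div_pos (by linarith) hδ
      set c : ℝ := w ^ ((1:ℝ)/ν) with hc
      have hcpos : 0 < c := rpow_pos_of_pos hwpos _
      have hgap' : 4 * c < μ (i+1) / μ i := hgap i hi'
      have h1 : 4 * c * μ i < μ (i+1) := (lt_div_iff₀ hμi).mp hgap'
      have hz : 4 * (μ i / μ (i+1)) < 1 / c := by
        rw [mul_div_assoc', div_lt_div_iff₀ hμi1 hcpos]
        nlinarith
      have hfrac : 4 * (ν / μ i) * (ν / μ (i+1)) / ((ν / μ i) + (ν / μ (i+1)))^2
          ≤ 4 * (μ i / μ (i+1)) := by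
        have hb2b1 : (ν / μ (i+1)) / (ν / μ i) = μ i / μ (i+1) := by
          field_simp
        have key : 4 * (ν / μ i) * (ν / μ (i+1)) / ((ν / μ i) + (ν / μ (i+1)))^2
            ≤ 4 * (ν / μ (i+1)) / (ν / μ i) := by
          rw [div_le_div_iff₀ (by positivity) hb1]
          nlinarith [sq_nonneg (ν / μ (i+1)), hb1.le, hb2.le]
        exact key.trans (le_of_eq (by rw [mul_div_assoc, hb2b1]))
      have hBle : B i ≤ (4 * (μ i / μ (i+1))) ^ ν :=
        rpow_le_rpow (by positivity) hfrac hν.le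
      have hlt2 : (4 * (μ i / μ (i+1))) ^ ν < (1/c) ^ ν :=
        rpow_lt_rpow (by positivity) hz hν
      have hfin : (1/c) ^ ν = δ / ((n:ℝ)-1) := by
        have hexp : (1/ν) * ν = 1 := by field_simp
        rw [div_rpow zero_le_one hcpos.le, one_rpow, hc, ← rpow_mul hwpos.le,
          hexp, rpow_one, hw, one_div_div]
      calc B i ≤ (4 * (μ i / μ (i+1))) ^ ν := hBle
        _ < (1/c) ^ ν := hlt2
        _ = δ / ((n:ℝ)-1) := hfin
    calc P Gᶜ ≤ ∑ i ∈ Finset.range (n-1), P {ω | Y (i+1) ω < Y i ω} :=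
          (measure_mono hBsub).trans (measure_biUnion_finset_le _ _)
      _ ≤ ∑ i ∈ Finset.range (n-1), ENNReal.ofReal (B i) := Finset.sum_le_sum hpairs
      _ = ENNReal.ofReal (∑ i ∈ Finset.range (n-1), B i) :=
          (ENNReal.ofReal_sum_of_nonneg (fun i hi => by
            have hi' : i + 1 < n := by have := Finset.mem_range.mp hi; omega
            have hμi := hpos i (by omega)
            have hμi1 := hpos (i+1) hi'
            have hb1 : 0 < ν / μ i := div_pos hν hμi
            have hb2 : 0 < ν / μ (i+1) := div_pos hν hμi1
            simp only [hB_def]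
            exact rpow_nonneg (div_nonneg (by nlinarith) (sq_nonneg _)) ν)).symm
      _ < ENNReal.ofReal δ := by
          rw [ENNReal.ofReal_lt_ofReal_iff hδ]
          calc ∑ i ∈ Finset.range (n-1), B i
              < ∑ _i ∈ Finset.range (n-1), δ / ((n:ℝ)-1) :=
                Finset.sum_lt_sum_of_nonempty (Finset.nonempty_range_iff.mpr (by omega)) hBreal
            _ = δ := by
                rw [Finset.sum_const, Finset.card_range, nsmul_eq_mul]
                have hcast : ((n-1 : ℕ):ℝ) = (n:ℝ) - 1 := by
                  rw [Nat.cast_sub (by omega)]; norm_num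
                rw [hcast]
                have hne : (n:ℝ) - 1 ≠ 0 := by linarith
                field_simp
  -- conclude
  have hPG : P G = 1 - P Gᶜ := by
    have h := prob_compl_eq_one_sub (μ := P) hGm.compl
    rwa [compl_compl] at h
  rw [gt_iff_lt, hPG]
  refine lt_tsub_iff_right.mpr ?_
  rcases le_or_gt 1 (ENNReal.ofReal δ) with hδ1 | hδ1
  · rw [tsub_eq_zero_of_le hδ1, zero_add, prob_compl_eq_one_sub hGm]
    exact ENNReal.sub_lt_self ENNReal.one_ne_top one_ne_zero hGpos.ne'
  · calc (1 - ENNReal.ofReal δ) + P Gᶜ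
        < (1 - ENNReal.ofReal δ) + ENNReal.ofReal δ :=
          ENNReal.add_lt_add_left (lt_of_le_of_lt tsub_le_self ENNReal.one_lt_top).ne hBlt
      _ = 1 := tsub_add_cancel_of_le hδ1.le
end
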